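/- If D' is an open Euclidean disk contained in the open unit disk D that is internally tangent to the boundary ∂D, then the hyperbolic area of D' is infinite. -/

import Mathlib

open MeasureTheory

/-- The hyperbolic area of a measurable subset of the open unit disk,
in the Poincaré disk model. -/
noncomputable def areaH (A : Set (EuclideanSpace ℝ (Fin 2))) : ENNReal :=
  ∫⁻ x in A, ENNReal.ofReal (4 / (1 - ‖x‖ ^ 2) ^ 2) ∂volume

/-!
A disk of radius `ρ` inside the unit disk whose closure meets the unit circle at `p` is centred at
`(1 - ρ) p`, so after a reflection it is the disk of radius `ρ` about `(1 - ρ, 0)`. That disk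
contains the box `(1 - 2t, 1 - t) × (-w, w)` as soon as `w² ≤ ρ t`, and on the box the density
`4 / (1 - |x|²)²` is at least `1 / (4 t²)`; so the box has hyperbolic area at least `w / (2 t)`,
which is unbounded along `w² = ρ t`, `t → 0`.
-/

open Set Metric

theorem EuclideanSpace.volume_setOf_forall_mem {ι : Type*} [Fintype ι] (s : ι → Set ℝ) :
    volume {x : EuclideanSpace ℝ ι | ∀ i, x i ∈ s i} = ∏ i, volume (s i) := by
  rw [← volume_pi_pi,
    ← (EuclideanSpace.volume_preserving_symm_measurableEquiv_toLp ι).measure_preimage_equiv]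
  congr 1 with x
  simp

theorem EuclideanSpace.norm_sq_fin_two (x : EuclideanSpace ℝ (Fin 2)) :
    ‖x‖ ^ 2 = x 0 ^ 2 + x 1 ^ 2 := by
  simp [EuclideanSpace.norm_sq_eq, Fin.sum_univ_two]

theorem norm_add_le_of_closedBall_subset_closedBall {E : Type*} [NormedAddCommGroup E]
    [NormedSpace ℝ E] [Nontrivial E] {c : E} {ρ R : ℝ} (hρ : 0 ≤ ρ)
    (h : closedBall c ρ ⊆ closedBall 0 R) : ‖c‖ + ρ ≤ R := by
  obtain ⟨u, hu, hcu⟩ : ∃ u : E, ‖u‖ = 1 ∧ ‖c‖ • u = c := by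
    rcases eq_or_ne c 0 with rfl | hc
    · obtain ⟨u, hu⟩ := exists_norm_eq E zero_le_one
      exact ⟨u, hu, by simp⟩
    · exact ⟨‖c‖⁻¹ • c, by simp [norm_smul, hc], by simp [smul_smul, hc]⟩
  have hmem : (‖c‖ + ρ) • u ∈ closedBall c ρ := by
    rw [mem_closedBall, dist_eq_norm, add_smul, hcu, add_sub_cancel_left, norm_smul, hu,
      mul_one, Real.norm_of_nonneg hρ]
  have := h hmem
  rwa [mem_closedBall_zero_iff, norm_smul, hu, mul_one,
    Real.norm_of_nonneg (add_nonneg (norm_nonneg c) hρ)] at this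

theorem eq_smul_of_norm_sub_le_of_norm_add_le {E : Type*} [NormedAddCommGroup E]
    [InnerProductSpace ℝ E] {p c : E} {ρ : ℝ} (hp : ‖p‖ = 1) (hpc : ‖p - c‖ ≤ ρ)
    (hc : ‖c‖ + ρ ≤ 1) : c = (1 - ρ) • p := by
  have hρ : 0 ≤ ρ := (norm_nonneg _).trans hpc
  have hρ1 : 0 ≤ 1 - ρ := by linarith [norm_nonneg c]
  have hpc2 : ‖p - c‖ ^ 2 ≤ ρ ^ 2 := pow_le_pow_left₀ (norm_nonneg _) hpc 2
  have hc2 : ‖c‖ ^ 2 ≤ (1 - ρ) ^ 2 := pow_le_pow_left₀ (norm_nonneg _) (by linarith) 2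
  suffices ‖c - (1 - ρ) • p‖ ^ 2 ≤ 0 by rwa [sq_nonpos_iff, norm_eq_zero, sub_eq_zero] at this
  rw [norm_sub_sq_real] at hpc2 ⊢
  rw [hp, real_inner_comm] at hpc2
  rw [norm_smul, inner_smul_right, Real.norm_of_nonneg hρ1, hp]
  nlinarith [mul_le_mul_of_nonneg_left hpc2 hρ1, mul_le_mul_of_nonneg_left hc2 hρ]

theorem areaH_image_linearIsometryEquiv
    (f : EuclideanSpace ℝ (Fin 2) ≃ₗᵢ[ℝ] EuclideanSpace ℝ (Fin 2))
    (A : Set (EuclideanSpace ℝ (Fin 2))) : areaH (f '' A) = areaH A := by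
  simp only [areaH, ← f.measurePreserving.setLIntegral_comp_emb
    f.toHomeomorph.measurableEmbedding, LinearIsometryEquiv.norm_map]

theorem areaH_mono {A B : Set (EuclideanSpace ℝ (Fin 2))} (h : A ⊆ B) : areaH A ≤ areaH B :=
  lintegral_mono_set h

def boundaryBox (t w : ℝ) : Set (EuclideanSpace ℝ (Fin 2)) :=
  {x | ∀ i, x i ∈ ![Ioo (1 - 2 * t) (1 - t), Ioo (-w) w] i}

section boundaryBox

variable {t w : ℝ} {x : EuclideanSpace ℝ (Fin 2)}

theorem mem_boundaryBox :
    x ∈ boundaryBox t w ↔ x 0 ∈ Ioo (1 - 2 * t) (1 - t) ∧ x 1 ∈ Ioo (-w) w := by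
  simp [boundaryBox, Fin.forall_fin_two]

theorem volume_boundaryBox :
    volume (boundaryBox t w) = ENNReal.ofReal t * ENNReal.ofReal (2 * w) := by
  rw [boundaryBox, EuclideanSpace.volume_setOf_forall_mem, Fin.prod_univ_two]
  simp only [Matrix.cons_val_zero, Matrix.cons_val_one, Real.volume_Ioo]
  ring_nf

theorem boundaryBox_subset_ball {ρ : ℝ} (ht : 0 ≤ t) (htρ : 2 * t ≤ ρ) (hw : w ^ 2 ≤ ρ * t) :
    boundaryBox t w ⊆ ball ((1 - ρ) • EuclideanSpace.single 0 1) ρ := by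
  intro x hx
  obtain ⟨⟨hx0, hx0'⟩, hx1, hx1'⟩ := mem_boundaryBox.1 hx
  rw [mem_ball, EuclideanSpace.dist_eq, Real.sqrt_lt' (by linarith), Fin.sum_univ_two]
  simp only [PiLp.smul_apply, PiLp.single_apply, Real.dist_eq, sq_abs]
  norm_num
  nlinarith

theorem one_div_four_mul_sq_le_of_mem_boundaryBox (ht : 0 < t) (ht1 : 2 * t ≤ 1)
    (hw : w ^ 2 ≤ t) (hx : x ∈ boundaryBox t w) :
    1 / (4 * t ^ 2) ≤ 4 / (1 - ‖x‖ ^ 2) ^ 2 := by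
  obtain ⟨⟨hx0, hx0'⟩, hx1, hx1'⟩ := mem_boundaryBox.1 hx
  have hx0sq : x 0 ^ 2 < (1 - t) ^ 2 := by nlinarith
  have hpos : 0 < 1 - ‖x‖ ^ 2 := by rw [EuclideanSpace.norm_sq_fin_two x]; nlinarith
  have hle : 1 - ‖x‖ ^ 2 ≤ 4 * t := by rw [EuclideanSpace.norm_sq_fin_two x]; nlinarith
  calc 1 / (4 * t ^ 2) = 4 / (4 * t) ^ 2 := by field_simp
    _ ≤ 4 / (1 - ‖x‖ ^ 2) ^ 2 := by gcongr

theorem ofReal_le_areaH_boundaryBox (ht : 0 < t) (ht1 : 2 * t ≤ 1)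
    (hwt : w ^ 2 ≤ t) : ENNReal.ofReal (w / (2 * t)) ≤ areaH (boundaryBox t w) :=
  calc ENNReal.ofReal (w / (2 * t))
      = ENNReal.ofReal (1 / (4 * t ^ 2)) * (ENNReal.ofReal t * ENNReal.ofReal (2 * w)) := by
        rw [← ENNReal.ofReal_mul (by positivity), ← ENNReal.ofReal_mul (by positivity)]
        congr 1
        field_simp
        ring
    _ = ∫⁻ _ in boundaryBox t w, ENNReal.ofReal (1 / (4 * t ^ 2)) := by
        rw [setLIntegral_const, volume_boundaryBox]
    _ ≤ areaH (boundaryBox t w) :=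
        setLIntegral_mono (by fun_prop) fun x hx =>
          ENNReal.ofReal_le_ofReal (one_div_four_mul_sq_le_of_mem_boundaryBox ht ht1 hwt hx)

end boundaryBox

theorem areaH_ball_smul_single_eq_top {ρ : ℝ} (hρ : 0 < ρ) (hρ1 : ρ ≤ 1) :
    areaH (ball ((1 - ρ) • EuclideanSpace.single 0 1) ρ) = ⊤ := by
  refine ENNReal.eq_top_of_forall_nnreal_le fun r => ?_
  set M : ℝ := r + 1 with hM
  have hM1 : 1 ≤ M := by simp [hM]
  set t := ρ / (4 * M ^ 2) with ht_def
  set w := ρ / (2 * M) with hw_def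
  have ht : 0 < t := by positivity
  have htρ : 2 * t ≤ ρ := by rw [ht_def]; field_simp; nlinarith
  have hw : w ^ 2 = ρ * t := by rw [hw_def, ht_def]; field_simp; ring
  calc (r : ENNReal) ≤ ENNReal.ofReal M := by
        rw [← ENNReal.ofReal_coe_nnreal]; exact ENNReal.ofReal_le_ofReal (by simp [hM])
    _ = ENNReal.ofReal (w / (2 * t)) := by rw [hw_def, ht_def]; congr 1; field_simp; norm_num
    _ ≤ areaH (boundaryBox t w) :=
        ofReal_le_areaH_boundaryBox ht (by linarith) (by nlinarith)
    _ ≤ _ := areaH_mono (boundaryBox_subset_ball ht.le htρ hw.le)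

theorem stmt2 (c : EuclideanSpace ℝ (Fin 2)) (ρ : ℝ) (hρ : 0 < ρ)
    (hsub : Metric.ball c ρ ⊆ Metric.ball (0 : EuclideanSpace ℝ (Fin 2)) 1)
    (htang : ∃! p : EuclideanSpace ℝ (Fin 2),
      p ∈ closure (Metric.ball c ρ) ∧ ‖p‖ = 1) :
    areaH (Metric.ball c ρ) = ⊤ := by
  obtain ⟨p, ⟨hp, hp1⟩, -⟩ := htang
  rw [closure_ball c hρ.ne', mem_closedBall_iff_norm] at hp
  have hc : ‖c‖ + ρ ≤ 1 := norm_add_le_of_closedBall_subset_closedBall hρ.le <| by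
    simpa only [closure_ball _ hρ.ne', closure_ball _ one_ne_zero] using closure_mono hsub
  have hcp : c = (1 - ρ) • p := eq_smul_of_norm_sub_le_of_norm_add_le hp1 hp hc
  set e : EuclideanSpace ℝ (Fin 2) := EuclideanSpace.single 0 1
  have hpe : Submodule.reflection (ℝ ∙ (p - e))ᗮ p = e :=
    Submodule.reflection_sub (by simp [hp1, e])
  rw [← areaH_image_linearIsometryEquiv (Submodule.reflection (ℝ ∙ (p - e))ᗮ),
    LinearIsometryEquiv.image_ball, hcp, map_smul, hpe]
  exact areaH_ball_smul_single_eq_top hρ (by linarith [norm_nonneg c])
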